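/- Let a' be a non-repeating word (no letter occurs twice), and let b, a be words with b ⊑ a' and a ⊑ a'. Then the set of common subsequences {c | c ⊑ b and c ⊑ a} has a unique ⊑-maximal element (the meet b ⊓ a). -/

import Mathlib

/-! Sublists of a non-repeating word are ordered by inclusion of their letter sets, so the
common subsequences of `b` and `a` are those whose letters all lie in both, and the letters of `b`
that occur in `a`, kept in their order in `b`, form the greatest one. -/

namespace List

theorem Nodup.sublist_iff_subset_of_sublist {α : Type*} {l s t : List α} (hl : l.Nodup)
    (hs : s <+ l) (ht : t <+ l) : s <+ t ↔ s ⊆ t := by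
  refine ⟨Sublist.subset, fun hst => ?_⟩
  obtain ⟨u, hus, hut⟩ := (hl.sublist hs).subperm hst
  rwa [(hl.perm_iff_eq_of_sublist (hut.trans ht) hs).1 hus] at hut

end List

/-- if `a'` is non-repeating and `b ⊑ a'`, `a ⊑ a'`, then the set
of common subsequences of `b` and `a` has a unique `⊑`-maximal element, namely
a greatest common subsequence (the meet `b ⊓ a`). -/
theorem unique_maximal_common_subsequence {α : Type*} (a' b a : List α)
    (hnd : a'.Nodup) (hb : List.Sublist b a') (ha : List.Sublist a a') :
    ∃! c : List α, List.Sublist c b ∧ List.Sublist c a ∧ ∀ d : List α, List.Sublist d b → List.Sublist d a → List.Sublist d c := by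
  classical
  set m := b.filter (· ∈ a)
  have hmb : m.Sublist b := List.filter_sublist
  have hma : m.Sublist a := (hnd.sublist_iff_subset_of_sublist (hmb.trans hb) ha).2 fun x hx =>
    of_decide_eq_true (List.mem_filter.1 hx).2
  have hm_greatest : ∀ d : List α, d.Sublist b → d.Sublist a → d.Sublist m := fun d hdb hda =>
    (hnd.sublist_iff_subset_of_sublist (hdb.trans hb) (hmb.trans hb)).2 fun x hx =>
      List.mem_filter.2 ⟨hdb.subset hx, decide_eq_true (hda.subset hx)⟩
  refine ⟨m, ⟨hmb, hma, hm_greatest⟩, fun c ⟨hcb, hca, hc⟩ => ?_⟩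
  exact (hm_greatest c hcb hca).antisymm (hc m hmb hma)
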